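/- arXiv:1901.08468 — 2 statements merged into one kernel-verified Lean document; each statement's English description precedes it below -/
import Mathlib

section
/- For finite variable sets x₁,…,x_m and y₁,…,y_l in a commutative ring and each k ≥ 0, the coefficient of t^k in ∏_{i,j}(1 - x_i y_j t)^{-1} equals Σ_{λ ⊢ k} h_λ(x) m_λ(y). -/
open MvPolynomial Finset

/-!
Every factor is a geometric series, so for a fixed `j` the product over `i` is the
generating function `∑ₙ hₙ(x) (y_j t)ⁿ` of the complete homogeneous polynomials. Hence the
coefficient of `t^k` is a sum over exponent vectors `c` of total weight `k` of
`∏_j h_{c_j}(x) y_j^{c_j}`. Such vectors are the multisets of size `k` on the `y`-indices, and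
grouping them by their shape `λ` (the partition formed by the multiplicities) turns the sum into
`∑_λ h_λ(x) m_λ(y)`.
-/

namespace PowerSeries

variable {R : Type*} [CommRing R]

theorem invOfUnit_one_sub_C_mul_X (a : R) :
    invOfUnit (1 - C a * X) 1 = mk (a ^ ·) := by
  have h : mk (a ^ ·) * (1 - C a * X) = 1 := by
    simpa [rescale_mk, rescale_X] using congrArg (rescale a) (mk_one_mul_one_sub_eq_one (S := R))
  calc invOfUnit (1 - C a * X) 1 = mk (a ^ ·) * (1 - C a * X) * invOfUnit (1 - C a * X) 1 := by
        rw [h, one_mul]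
    _ = mk (a ^ ·) := by rw [mul_assoc, mul_invOfUnit _ _ (by simp), mul_one]

end PowerSeries

theorem Sym.sum_toFinsupp_eq_sum_finsuppAntidiag {σ M : Type*} [Fintype σ] [DecidableEq σ]
    [AddCommMonoid M] (n : ℕ) (f : (σ →₀ ℕ) → M) :
    ∑ s : Sym σ n, f (Multiset.toFinsupp s) = ∑ c ∈ finsuppAntidiag univ n, f c := by
  refine sum_bij' (fun s _ ↦ Multiset.toFinsupp s) (fun c hc ↦ ⟨Finsupp.toMultiset c, ?_⟩)
    (fun s _ ↦ ?_) (fun _ _ ↦ mem_univ _) (fun s _ ↦ ?_) (fun c _ ↦ ?_) (fun _ _ ↦ rfl)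
  · rw [mem_finsuppAntidiag'] at hc
    exact (Finsupp.card_toMultiset c).trans hc.1
  · rw [mem_finsuppAntidiag']
    exact ⟨(Multiset.toFinsupp_sum_eq _).trans s.2, subset_univ _⟩
  · ext1; simp
  · simp

namespace MvPolynomial

variable {σ τ R : Type*} [Fintype σ] [DecidableEq σ]

theorem eval_prod_map_X [CommSemiring R] (x : σ → R) (s : Multiset σ) :
    eval x (s.map X).prod = ∏ i, x i ^ s.count i := by
  simp only [map_multiset_prod, Multiset.map_map, Function.comp_def, eval_X]
  rw [prod_multiset_map_count]
  exact prod_subset (subset_univ _) fun i _ hi ↦ by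
    rw [Multiset.count_eq_zero.mpr (by simpa using hi), pow_zero]

theorem eval_hsymm [CommSemiring R] (x : σ → R) (n : ℕ) :
    eval x (hsymm σ R n) = ∑ c ∈ finsuppAntidiag univ n, ∏ i, x i ^ c i := by
  simp only [hsymm, map_sum, eval_prod_map_X]
  exact Sym.sum_toFinsupp_eq_sum_finsuppAntidiag n fun c ↦ ∏ i, x i ^ c i

theorem hsymmPart_ofSym [Fintype τ] [DecidableEq τ] [CommSemiring R] {n : ℕ} (s : Sym σ n) :
    hsymmPart τ R (Nat.Partition.ofSym s) = ∏ j, hsymm τ R ((s : Multiset σ).count j) := by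
  have hparts :
      (Nat.Partition.ofSym s).parts = (s : Multiset σ).toFinset.val.map (Multiset.count · s) :=
    rfl
  rw [hsymmPart, hparts, Multiset.map_map, ← prod_eq_multiset_prod]
  exact prod_subset (subset_univ _) fun j _ hj ↦ by
    rw [Function.comp_apply, Multiset.count_eq_zero.mpr (by simpa using hj), hsymm_zero]

theorem sum_eval_hsymmPart_mul_eval_msymm [Fintype τ] [DecidableEq τ] [CommSemiring R]
    (x : τ → R) (y : σ → R) (k : ℕ) :
    ∑ μ : k.Partition, eval x (hsymmPart τ R μ) * eval y (msymm σ R μ) =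
      ∑ c ∈ finsuppAntidiag univ k, ∏ j, eval x (hsymm τ R (c j)) * y j ^ c j := by
  let g (s : Sym σ k) : R :=
    eval x (hsymmPart τ R (Nat.Partition.ofSym s)) * eval y ((s : Multiset σ).map X).prod
  have hfiber (μ : k.Partition) : eval x (hsymmPart τ R μ) * eval y (msymm σ R μ) =
      ∑ s : {s : Sym σ k // Nat.Partition.ofSym s = μ}, g s := by
    rw [msymm, map_sum, mul_sum]
    exact sum_congr rfl fun ⟨s, hs⟩ _ ↦ by subst hs; rfl
  rw [sum_congr rfl fun μ _ ↦ hfiber μ, Fintype.sum_fiberwise (Nat.Partition.ofSym ·) g]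
  simp only [g, hsymmPart_ofSym, map_prod, eval_prod_map_X, ← prod_mul_distrib]
  exact Sym.sum_toFinsupp_eq_sum_finsuppAntidiag k fun c ↦
    ∏ j, eval x (hsymm τ R (c j)) * y j ^ c j

end MvPolynomial

open MvPolynomial PowerSeries in
theorem PowerSeries.prod_invOfUnit_one_sub_C_mul_X_eq_mk_hsymm {σ R : Type*} [Fintype σ]
    [DecidableEq σ] [CommRing R] (x : σ → R) (b : R) :
    ∏ i, invOfUnit (1 - PowerSeries.C (x i * b) * X) 1 =
      mk fun n ↦ eval x (hsymm σ R n) * b ^ n := by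
  ext n
  simp only [invOfUnit_one_sub_C_mul_X, coeff_prod, coeff_mk, eval_hsymm, sum_mul, mul_pow,
    prod_mul_distrib, prod_pow_eq_pow_sum]
  exact sum_congr rfl fun c hc ↦ by rw [(mem_finsuppAntidiag.mp hc).1]

/-- Cauchy product expansion: the coefficient of `t^k` in `∏_{i,j}(1 - x_i y_j t)⁻¹`
equals `Σ_{λ ⊢ k} h_λ(x) m_λ(y)`. -/
theorem cauchy_product_hsymm {R : Type*} [CommRing R] (m l : ℕ)
    (x : Fin m → R) (y : Fin l → R) (k : ℕ) :
    PowerSeries.coeff (R := R) k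
      (∏ i : Fin m, ∏ j : Fin l,
        PowerSeries.invOfUnit (1 - PowerSeries.C (R := R) (x i * y j) * PowerSeries.X) 1) =
      ∑ μ : Nat.Partition k, eval x (hsymmPart (Fin m) R μ) * eval y (msymm (Fin l) R μ) := by
  rw [prod_comm]
  simp only [PowerSeries.prod_invOfUnit_one_sub_C_mul_X_eq_mk_hsymm, PowerSeries.coeff_prod,
    PowerSeries.coeff_mk, sum_eval_hsymmPart_mul_eval_msymm]
end

section
/- For finite variable sets x and y and every k ≥ 0, Σ_{λ ⊢ k} e_λ(x) m_λ(y) = Σ_{λ ⊢ k} e_λ(y) m_λ(x). -/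
/-!
Both sides are the coefficient of `t ^ k` in `∏ i j, (1 + x i * y j * t)`. Taking the product over
`i` first gives `∏ j, E (y j * t)` with `E t = ∏ i, (1 + x i * t) = ∑ c, e_c(x) t ^ c`, whose
`t ^ k`-coefficient is the sum over exponent vectors `d` of `k` of `∏ j, e_{d j}(x) * y j ^ d j`.
Grouping the `d` by the partition formed by their nonzero entries gives `∑ λ, e_λ(x) m_λ(y)`;
taking the product over `j` first gives the same expression with `x` and `y` exchanged.
-/

open MvPolynomial

namespace PowerSeries

variable {R : Type*} [CommSemiring R]

theorem coeff_prod_one_add_C_mul_X {ι : Type*} (s : Finset ι) (a : ι → R) (k : ℕ) :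
    coeff k (∏ i ∈ s, (1 + C (a i) * X)) = ∑ t ∈ s.powersetCard k, ∏ i ∈ t, a i := by
  simp_rw [Finset.prod_one_add, map_sum, Finset.prod_mul_distrib, ← map_prod, Finset.prod_const,
    coeff_C_mul_X_pow, Finset.powersetCard_eq_filter, Finset.sum_filter, eq_comm]

theorem coeff_prod_one_add_C_mul_X_eq_eval_esymm {σ : Type*} [Fintype σ] (a : σ → R) (k : ℕ) :
    coeff k (∏ i, (1 + C (a i) * X)) = eval a (esymm σ R k) := by
  simp [coeff_prod_one_add_C_mul_X, esymm, map_sum, map_prod]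

theorem prod_one_add_C_mul_mul_X_eq_rescale {ι : Type*} (s : Finset ι) (a : ι → R) (b : R) :
    ∏ i ∈ s, (1 + C (a i * b) * X) = rescale b (∏ i ∈ s, (1 + C (a i) * X)) := by
  have rescale_C_mul_X (r : R) : rescale b (C r * X) = C (r * b) * X := by
    ext n
    simp only [coeff_rescale, coeff_C_mul, coeff_X]
    split_ifs with h <;> simp [h, mul_comm]
  simp [map_prod, rescale_C_mul_X]

end PowerSeries

theorem Finset.sum_finsuppAntidiag_univ_eq_sum_sym {τ M : Type*} [Fintype τ] [DecidableEq τ]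
    [AddCommMonoid M] (k : ℕ) (f : (τ →₀ ℕ) → M) :
    ∑ d ∈ univ.finsuppAntidiag k, f d = ∑ a : Sym τ k, f (Multiset.toFinsupp a) := by
  refine sum_bij' (fun d hd => ⟨Finsupp.toMultiset d, ?_⟩) (fun a _ => Multiset.toFinsupp a)
    (fun _ _ => mem_univ _) (fun a _ => ?_) (fun d _ => Finsupp.toMultiset_toFinsupp d)
    (fun a _ => Subtype.ext (Multiset.toFinsupp_toMultiset a.1)) (fun d _ => by simp)
  · rw [Finsupp.card_toMultiset]
    exact (mem_finsuppAntidiag'.mp hd).1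
  · exact mem_finsuppAntidiag'.mpr ⟨(Multiset.toFinsupp_sum_eq _).trans a.2, subset_univ _⟩

namespace MvPolynomial

variable {σ τ R : Type*} [CommSemiring R] [Fintype σ] [DecidableEq τ] {n : ℕ}

theorem esymmPart_ofSym (a : Sym τ n) :
    esymmPart σ R (.ofSym a) = ∏ j ∈ a.1.toFinset, esymm σ R (a.1.count j) := by
  simp [esymmPart, Nat.Partition.ofSym, Finset.prod_eq_multiset_prod, Multiset.map_map]

variable [Fintype τ]

theorem eval_msymm (y : τ → R) (μ : n.Partition) :
    eval y (msymm τ R μ) = ∑ s : {a : Sym τ n // .ofSym a = μ}, (s.1.1.map y).prod := by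
  simp [msymm, map_sum, map_multiset_prod, Multiset.map_map]

theorem sum_mul_eval_msymm (f : n.Partition → R) (y : τ → R) :
    ∑ μ, f μ * eval y (msymm τ R μ) = ∑ a : Sym τ n, f (.ofSym a) * (a.1.map y).prod := by
  simp_rw [eval_msymm, Finset.mul_sum]
  rw [← Fintype.sum_fiberwise fun a : Sym τ n => Nat.Partition.ofSym a]
  exact Fintype.sum_congr _ _ fun μ => Fintype.sum_congr _ _ fun s => by rw [s.2]

theorem sum_eval_esymmPart_mul_eval_msymm_eq_coeff (x : σ → R) (y : τ → R) (k : ℕ) :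
    ∑ μ : k.Partition, eval x (esymmPart σ R μ) * eval y (msymm τ R μ) =
      PowerSeries.coeff k (∏ j, ∏ i, (1 + PowerSeries.C (x i * y j) * PowerSeries.X)) := by
  rw [sum_mul_eval_msymm, PowerSeries.coeff_prod, Finset.sum_finsuppAntidiag_univ_eq_sum_sym]
  refine Fintype.sum_congr _ _ fun a => ?_
  simp only [Multiset.toFinsupp_apply, PowerSeries.prod_one_add_C_mul_mul_X_eq_rescale,
    PowerSeries.coeff_rescale, PowerSeries.coeff_prod_one_add_C_mul_X_eq_eval_esymm]
  rw [esymmPart_ofSym, map_prod, Finset.prod_multiset_map_count, ← Finset.prod_mul_distrib]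
  refine Finset.prod_subset (Finset.subset_univ _) (fun j _ hj => ?_) |>.trans
    (Fintype.prod_congr _ _ fun j => mul_comm _ _)
  rw [Multiset.count_eq_zero_of_notMem (Multiset.mem_toFinset.not.mp hj)]
  simp

end MvPolynomial

/-- Symmetry: `Σ_{λ ⊢ k} e_λ(x) m_λ(y) = Σ_{λ ⊢ k} e_λ(y) m_λ(x)`. -/
theorem esymm_msymm_symmetry {R : Type*} [CommRing R] (m l : ℕ)
    (x : Fin m → R) (y : Fin l → R) (k : ℕ) :
    ∑ μ : Nat.Partition k, eval x (esymmPart (Fin m) R μ) * eval y (msymm (Fin l) R μ) =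
      ∑ μ : Nat.Partition k, eval y (esymmPart (Fin l) R μ) * eval x (msymm (Fin m) R μ) := by
  rw [sum_eval_esymmPart_mul_eval_msymm_eq_coeff, sum_eval_esymmPart_mul_eval_msymm_eq_coeff,
    Finset.prod_comm]
  simp_rw [mul_comm (x _)]
end
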